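/- arXiv:2207.08881 — 3 statements merged into one kernel-verified Lean document; each statement's English description precedes it below -/
import Mathlib

section
/- For every a>0, every integer m≥1, every integer ℓ≥1, every continuous function f on [−a,a], every ω>0, every choice of kernel κ ∈ {sin, cos}, and every y ∈ [−a,a], the approximate integral satisfies |I^ω_{m,ℓ}(f,y)| ≤ 2a · ‖C_{m,ℓ}‖_∞ · ‖f‖, where ‖f‖ = max_{x∈[−a,a]}|f(x)| and ‖·‖_∞ is the maximum absolute row sum matrix norm. -/
open Real MeasureTheory

/-- Bernstein basis polynomial on `[-a, a]`. -/
noncomputable def pbar (a : ℝ) (m k : ℕ) (x : ℝ) : ℝ :=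
  (Nat.choose m k : ℝ) * ((a + x) / (2 * a)) ^ k * ((a - x) / (2 * a)) ^ (m - k)

/-- Equispaced nodes `t_k = -a + 2ak/m` on `[-a, a]`. -/
noncomputable def node (a : ℝ) (m k : ℕ) : ℝ := -a + 2 * a * k / m

/-- The Bernstein operator on `[-a, a]`. -/
noncomputable def Bop (a : ℝ) (m : ℕ) (f : ℝ → ℝ) (x : ℝ) : ℝ :=
  ∑ k ∈ Finset.range (m + 1), f (node a m k) * pbar a m k x

/-- The generalized Bernstein polynomial `B̄_{m,ℓ}(f) = f - (Id - B̄_m)^ℓ f`. -/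
noncomputable def GB (a : ℝ) (m ℓ : ℕ) (f : ℝ → ℝ) : ℝ → ℝ :=
  f - (fun g => g - Bop a m g)^[ℓ] f

/-- The matrix `A` with entries `A_{ij} = p̄_{m,j}(t_i)`. -/
noncomputable def Amat (a : ℝ) (m : ℕ) : Matrix (Fin (m + 1)) (Fin (m + 1)) ℝ :=
  fun i j => pbar a m j (node a m i)

/-- The matrix `C_{m,ℓ} = Σ_{s=0}^{ℓ-1} (I - A)^s`. -/
noncomputable def Cmat (a : ℝ) (m ℓ : ℕ) : Matrix (Fin (m + 1)) (Fin (m + 1)) ℝ :=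
  ∑ s ∈ Finset.range ℓ, (1 - Amat a m) ^ s

/-- Maximum absolute row sum matrix norm. -/
noncomputable def infNorm {n : ℕ} (M : Matrix (Fin n) (Fin n) ℝ) : ℝ :=
  ⨆ i, ∑ j, |M i j|

/-- Sup norm of `f` over `[-a, a]`. -/
noncomputable def supNorm (a : ℝ) (f : ℝ → ℝ) : ℝ :=
  sSup ((fun x => |f x|) '' Set.Icc (-a) a)

/-- The approximate integral `I^ω_{m,ℓ}(f, y) = ∫_{-a}^a κ(ω(y-x)) B̄_{m,ℓ}(f, x) dx`. -/
noncomputable def Iapprox (a : ℝ) (m ℓ : ℕ) (ω : ℝ) (κ f : ℝ → ℝ) (y : ℝ) : ℝ :=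
  ∫ x in (-a)..a, κ (ω * (y - x)) * GB a m ℓ f x

/-!
Telescoping gives `f - (Id - B̄_m)^ℓ f = Σ_{s<ℓ} B̄_m((Id - B̄_m)^s f)`, and on nodal values
`B̄_m` acts as the matrix `A`; hence `B̄_{m,ℓ} f = Σ_k (C_{m,ℓ} v)_k p̄_{m,k}` with `v` the vector of
nodal values of `f`. The `p̄_{m,k}` are a nonnegative partition of unity on `[-a, a]`, so
`|B̄_{m,ℓ} f| ≤ ‖C_{m,ℓ}‖_∞ ‖f‖` there, and `|κ| ≤ 1` turns this into the bound on the integral.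
-/

open Matrix

theorem sub_iterate_sub_eq_sum {G : Type*} [AddCommGroup G] (T : G → G) (f : G) (ℓ : ℕ) :
    f - (fun g => g - T g)^[ℓ] f = ∑ s ∈ Finset.range ℓ, T ((fun g => g - T g)^[s] f) := by
  have htele := Finset.sum_range_sub' (fun s => (fun g => g - T g)^[s] f) ℓ
  rw [Function.iterate_zero_apply] at htele
  rw [← htele]
  refine Finset.sum_congr rfl fun s _ => ?_
  rw [Function.iterate_succ_apply', sub_sub_cancel]

lemma pbar_nonneg {a : ℝ} (ha : 0 < a) (m k : ℕ) {x : ℝ} (hx : x ∈ Set.Icc (-a) a) :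
    0 ≤ pbar a m k x := by
  obtain ⟨hxl, hxr⟩ := hx
  unfold pbar
  have : 0 ≤ (a + x) / (2 * a) := div_nonneg (by linarith) (by linarith)
  have : 0 ≤ (a - x) / (2 * a) := div_nonneg (by linarith) (by linarith)
  positivity

lemma sum_pbar {a : ℝ} (ha : a ≠ 0) (m : ℕ) (x : ℝ) :
    ∑ k : Fin (m + 1), pbar a m k x = 1 := by
  have hsum : (a + x) / (2 * a) + (a - x) / (2 * a) = 1 := by
    field_simp
    ring
  calc ∑ k : Fin (m + 1), pbar a m k x = ∑ k ∈ Finset.range (m + 1), pbar a m k x :=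
        Fin.sum_univ_eq_sum_range (fun k => pbar a m k x) (m + 1)
    _ = ((a + x) / (2 * a) + (a - x) / (2 * a)) ^ m := by
        rw [add_pow]
        exact Finset.sum_congr rfl fun k _ => by unfold pbar; ring
    _ = 1 := by rw [hsum, one_pow]

lemma node_mem_Icc {a : ℝ} (ha : 0 < a) {m k : ℕ} (hk : k ≤ m) :
    node a m k ∈ Set.Icc (-a) a := by
  have hratio : (k : ℝ) / m ≤ 1 := div_le_one_of_le₀ (by exact_mod_cast hk) (Nat.cast_nonneg m)
  have : 0 ≤ (k : ℝ) / m := by positivity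
  unfold node
  rw [mul_div_assoc]
  constructor <;> nlinarith

lemma abs_le_supNorm {a : ℝ} {f : ℝ → ℝ} (hf : ContinuousOn f (Set.Icc (-a) a)) {x : ℝ}
    (hx : x ∈ Set.Icc (-a) a) : |f x| ≤ supNorm a f :=
  le_csSup (isCompact_Icc.image_of_continuousOn hf.abs).bddAbove ⟨x, hx, rfl⟩

lemma abs_mulVec_le_infNorm_mul {n : ℕ} (M : Matrix (Fin n) (Fin n) ℝ) {v : Fin n → ℝ} {B : ℝ}
    (hv : ∀ j, |v j| ≤ B) (i : Fin n) : |(M *ᵥ v) i| ≤ infNorm M * B := by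
  have hB : 0 ≤ B := (abs_nonneg _).trans (hv i)
  have hrow : ∑ j, |M i j| ≤ infNorm M :=
    le_ciSup (f := fun i => ∑ j, |M i j|) (Set.finite_range _).bddAbove i
  calc |(M *ᵥ v) i| = |∑ j, M i j * v j| := rfl
    _ ≤ ∑ j, |M i j| * B := by
      refine (Finset.abs_sum_le_sum_abs _ _).trans (Finset.sum_le_sum fun j _ => ?_)
      rw [abs_mul]
      exact mul_le_mul_of_nonneg_left (hv j) (abs_nonneg _)
    _ ≤ infNorm M * B := by
      rw [← Finset.sum_mul]
      exact mul_le_mul_of_nonneg_right hrow hB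

noncomputable def nodeValues (a : ℝ) (m : ℕ) (g : ℝ → ℝ) : Fin (m + 1) → ℝ :=
  fun j => g (node a m j)

lemma Bop_eq_sum_fin (a : ℝ) (m : ℕ) (g : ℝ → ℝ) (x : ℝ) :
    Bop a m g x = ∑ j : Fin (m + 1), nodeValues a m g j * pbar a m j x := by
  rw [Bop, ← Fin.sum_univ_eq_sum_range]
  rfl

lemma nodeValues_Bop (a : ℝ) (m : ℕ) (g : ℝ → ℝ) :
    nodeValues a m (Bop a m g) = Amat a m *ᵥ nodeValues a m g := by
  ext i
  simp only [nodeValues, Bop_eq_sum_fin, mulVec, dotProduct, Amat, mul_comm]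

lemma nodeValues_iterate_sub_Bop (a : ℝ) (m : ℕ) (f : ℝ → ℝ) (s : ℕ) :
    nodeValues a m ((fun g => g - Bop a m g)^[s] f) = (1 - Amat a m) ^ s *ᵥ nodeValues a m f := by
  induction s with
  | zero => simp
  | succ s ih =>
    rw [Function.iterate_succ_apply', pow_succ', ← mulVec_mulVec, ← ih, sub_mulVec, one_mulVec,
      ← nodeValues_Bop]
    rfl

lemma GB_eq_sum_Cmat_mulVec (a : ℝ) (m ℓ : ℕ) (f : ℝ → ℝ) (x : ℝ) :
    GB a m ℓ f x = ∑ k : Fin (m + 1), (Cmat a m ℓ *ᵥ nodeValues a m f) k * pbar a m k x := by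
  rw [GB, sub_iterate_sub_eq_sum, Finset.sum_apply]
  simp only [Bop_eq_sum_fin, nodeValues_iterate_sub_Bop, Cmat, sum_mulVec, Finset.sum_apply,
    Finset.sum_mul]
  exact Finset.sum_comm

lemma abs_sum_mul_pbar_le {a : ℝ} (ha : 0 < a) {m : ℕ} {c : Fin (m + 1) → ℝ} {B : ℝ}
    (hc : ∀ k, |c k| ≤ B) {x : ℝ} (hx : x ∈ Set.Icc (-a) a) :
    |∑ k : Fin (m + 1), c k * pbar a m k x| ≤ B :=
  calc |∑ k : Fin (m + 1), c k * pbar a m k x| ≤ ∑ k : Fin (m + 1), B * pbar a m k x := by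
        refine (Finset.abs_sum_le_sum_abs _ _).trans (Finset.sum_le_sum fun k _ => ?_)
        rw [abs_mul, abs_of_nonneg (pbar_nonneg ha m k hx)]
        exact mul_le_mul_of_nonneg_right (hc k) (pbar_nonneg ha m k hx)
    _ = B := by rw [← Finset.mul_sum, sum_pbar ha.ne', mul_one]

lemma abs_GB_le {a : ℝ} (ha : 0 < a) (m ℓ : ℕ) {f : ℝ → ℝ}
    (hf : ContinuousOn f (Set.Icc (-a) a)) {x : ℝ} (hx : x ∈ Set.Icc (-a) a) :
    |GB a m ℓ f x| ≤ infNorm (Cmat a m ℓ) * supNorm a f := by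
  rw [GB_eq_sum_Cmat_mulVec]
  refine abs_sum_mul_pbar_le ha (fun k => abs_mulVec_le_infNorm_mul _ (fun j => ?_) k) hx
  exact abs_le_supNorm hf (node_mem_Icc ha (Nat.lt_succ_iff.mp j.isLt))

theorem stmt0_general (a : ℝ) (ha : 0 < a) (m ℓ : ℕ)
    (f : ℝ → ℝ) (hf : ContinuousOn f (Set.Icc (-a) a))
    (ω : ℝ) (κ : ℝ → ℝ) (hκ : κ = Real.sin ∨ κ = Real.cos)
    (y : ℝ) :
    |Iapprox a m ℓ ω κ f y| ≤ 2 * a * infNorm (Cmat a m ℓ) * supNorm a f := by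
  have hκ_le : ∀ t, |κ t| ≤ 1 := by
    rcases hκ with rfl | rfl
    exacts [abs_sin_le_one, abs_cos_le_one]
  have hbound : ∀ x ∈ Set.uIoc (-a) a,
      ‖κ (ω * (y - x)) * GB a m ℓ f x‖ ≤ infNorm (Cmat a m ℓ) * supNorm a f := by
    intro x hx
    rw [Set.uIoc_of_le (by linarith)] at hx
    rw [Real.norm_eq_abs, abs_mul]
    exact (mul_le_mul (hκ_le _) (abs_GB_le ha m ℓ hf (Set.Ioc_subset_Icc_self hx))
      (abs_nonneg _) zero_le_one).trans_eq (one_mul _)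
  have hI := intervalIntegral.norm_integral_le_of_norm_le_const hbound
  rw [Real.norm_eq_abs, abs_of_nonneg (by linarith : (0 : ℝ) ≤ a - -a)] at hI
  rw [Iapprox]
  linarith

theorem stmt0 (a : ℝ) (ha : 0 < a) (m ℓ : ℕ) (hm : 1 ≤ m) (hℓ : 1 ≤ ℓ)
    (f : ℝ → ℝ) (hf : ContinuousOn f (Set.Icc (-a) a))
    (ω : ℝ) (hω : 0 < ω) (κ : ℝ → ℝ) (hκ : κ = Real.sin ∨ κ = Real.cos)
    (y : ℝ) (hy : y ∈ Set.Icc (-a) a) :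
    |Iapprox a m ℓ ω κ f y| ≤ 2 * a * infNorm (Cmat a m ℓ) * supNorm a f :=
  stmt0_general a ha m ℓ f hf ω κ hκ y
end

section
/- (Representation of the generalized Bernstein polynomial.) For every a>0, every pair of integers m≥1, ℓ≥1, every function f : [−a,a] → ℝ, and every x ∈ [−a,a], the generalized Bernstein polynomial admits the representation B̄_{m,ℓ}(f,x) = Σ_{j=0}^m ( Σ_{i=0}^m p̄_{m,i}(x) · c_{ij}^{(m,ℓ)} ) · f(t_j), where c_{ij}^{(m,ℓ)} are the entries of the matrix C_{m,ℓ} = Σ_{s=0}^{ℓ−1}(I−A)^s. -/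
open Real MeasureTheory

/-- The exact integral `I^ω(f, y) = ∫_{-a}^a κ(ω(y-x)) f(x) dx`. -/
noncomputable def Iexact (a ω : ℝ) (κ f : ℝ → ℝ) (y : ℝ) : ℝ :=
  ∫ x in (-a)..a, κ (ω * (y - x)) * f x

/-!
`B̄_m` is a nodal operator `L g = ∑ₖ g(tₖ) φₖ`, so the residual operator `Id - L` acts on node
values as the matrix `I - A`. Telescoping gives `f - (Id - L)^ℓ f = ∑_{s<ℓ} L((Id - L)^s f)`, and
each summand depends on `f` only through its node values, transformed by `(I - A)^s`.
-/

open Matrix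

theorem sub_iterate_sub_eq_sum_range {M : Type*} [AddCommGroup M] (L : M → M) (f : M) (ℓ : ℕ) :
    f - (fun g => g - L g)^[ℓ] f = ∑ s ∈ Finset.range ℓ, L ((fun g => g - L g)^[s] f) := by
  induction ℓ with
  | zero => simp
  | succ ℓ ih =>
    rw [Finset.sum_range_succ, ← ih, Function.iterate_succ_apply']
    abel

section NodalOp

variable {α R ι : Type*} [CommRing R] [Fintype ι] (t : ι → α) (φ : ι → α → R)

def nodalOp (g : α → R) (x : α) : R :=
  ∑ k, g (t k) * φ k x

def nodalMatrix : Matrix ι ι R :=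
  Matrix.of fun i j => φ j (t i)

theorem nodalOp_apply (g : α → R) (x : α) :
    nodalOp t φ g x = (fun i => φ i x) ⬝ᵥ (g ∘ t) :=
  dotProduct_comm _ _

theorem nodalOp_comp (g : α → R) : nodalOp t φ g ∘ t = nodalMatrix t φ *ᵥ (g ∘ t) := by
  funext i
  exact nodalOp_apply t φ g (t i)

variable [DecidableEq ι]

theorem iterate_sub_nodalOp_comp (f : α → R) (s : ℕ) :
    (fun g => g - nodalOp t φ g)^[s] f ∘ t = (1 - nodalMatrix t φ) ^ s *ᵥ (f ∘ t) := by
  induction s with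
  | zero => simp
  | succ s ih =>
    rw [Function.iterate_succ_apply', Pi.sub_comp, nodalOp_comp, ih, pow_succ',
      ← mulVec_mulVec, sub_mulVec, one_mulVec]

theorem sub_iterate_sub_nodalOp (f : α → R) (ℓ : ℕ) (x : α) :
    (f - (fun g => g - nodalOp t φ g)^[ℓ] f) x =
      (fun i => φ i x) ᵥ* (∑ s ∈ Finset.range ℓ, (1 - nodalMatrix t φ) ^ s) ⬝ᵥ (f ∘ t) := by
  rw [sub_iterate_sub_eq_sum_range, Finset.sum_apply, ← dotProduct_mulVec, sum_mulVec,
    dotProduct_sum]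
  refine Finset.sum_congr rfl fun s _ => ?_
  rw [nodalOp_apply, iterate_sub_nodalOp_comp]

end NodalOp

theorem Bop_eq_nodalOp (a : ℝ) (m : ℕ) :
    Bop a m = nodalOp (fun k : Fin (m + 1) => node a m k) (fun k => pbar a m k) := by
  funext g x
  exact (Fin.sum_univ_eq_sum_range (fun k => g (node a m k) * pbar a m k x) (m + 1)).symm

theorem stmt5_general (a : ℝ) (m ℓ : ℕ) (f : ℝ → ℝ) (x : ℝ) :
    GB a m ℓ f x =
      ∑ j : Fin (m + 1), (∑ i : Fin (m + 1), pbar a m i.val x * Cmat a m ℓ i j) *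
        f (node a m j.val) := by
  rw [GB, Bop_eq_nodalOp, sub_iterate_sub_nodalOp]
  -- `Amat` is `nodalMatrix` of the nodes and `pbar`, so both sides are `(p̄(x) ᵥ* C) ⬝ᵥ (f ∘ t)`
  rfl

theorem stmt5 (a : ℝ) (ha : 0 < a) (m ℓ : ℕ) (hm : 1 ≤ m) (hℓ : 1 ≤ ℓ)
    (f : ℝ → ℝ) (x : ℝ) (hx : x ∈ Set.Icc (-a) a) :
    GB a m ℓ f x =
      ∑ j : Fin (m + 1), (∑ i : Fin (m + 1), pbar a m i.val x * Cmat a m ℓ i j) *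
        f (node a m j.val) :=
  stmt5_general a m ℓ f x
end

section
/- (Stirling-type bound for the maximum of the Bernstein basis.) For every integer m≥2 and every integer i with 1 ≤ i ≤ m−1, one has C(m,i) · i^i · (m−i)^{m−i} / m^m ≤ e^{1/12} · √( m / (2π · i · (m−i)) ). In particular, C(m,i)·(i/m)^i·((m−i)/m)^{m−i} ≤ e^{1/12} · √m / √(2π i). -/
/-!
Robbins' bound on consecutive terms of the Stirling sequence telescopes to
`√(2πn) (n/e)^n ≤ n! ≤ √(2πn) (n/e)^n e^{1/(12n)}`. Bounding `m!` from above and `i!`,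
`(m-i)!` from below, the powers of `e` and of `m, i, m-i` cancel and leave
`e^{1/(12m)} √(m / (2π i (m-i)))`.
-/

open Real Filter Topology Nat

namespace Stirling

theorem stirlingSeq_le_sqrt_pi_mul_exp {n : ℕ} (hn : n ≠ 0) :
    stirlingSeq n ≤ √π * exp (1 / (12 * n)) := by
  obtain ⟨k, rfl⟩ := exists_eq_succ_of_ne_zero hn
  -- Robbins' stepwise bound telescopes: `log (stirlingSeq n) - 1 / (12 n)` increases to
  -- `log √π`.
  set f : ℕ → ℝ := fun k ↦ log (stirlingSeq (k + 1)) - 1 / (12 * (k + 1 : ℕ))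
  have hmono : Monotone f := monotone_nat_of_le_succ fun k ↦ by
    have := log_stirlingSeq_sdiff_le (k + 1)
    simp only [f]
    push_cast at this ⊢
    have : (1 : ℝ) / (12 * (k + 1) * (k + 1 + 1)) =
        1 / (12 * (k + 1)) - 1 / (12 * (k + 1 + 1)) := by
      field_simp; ring
    linarith
  have hlim : Tendsto f atTop (𝓝 (log √π - 0)) := by
    refine Tendsto.sub ?_ ?_
    · exact (tendsto_stirlingSeq_sqrt_pi.comp (tendsto_add_atTop_nat 1)).log (by positivity)
    · simpa only [Function.comp_def, div_div] using
        (tendsto_const_div_atTop_nhds_zero_nat (1 / 12 : ℝ)).comp (tendsto_add_atTop_nat 1)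
  have hk : log (stirlingSeq (k + 1)) ≤ log √π + 1 / (12 * (k + 1 : ℕ)) := by
    have := hmono.ge_of_tendsto hlim k
    simp only [f, sub_zero] at this
    linarith
  calc stirlingSeq (k + 1) = exp (log (stirlingSeq (k + 1))) :=
        (exp_log (stirlingSeq'_pos k)).symm
    _ ≤ exp (log √π + 1 / (12 * (k + 1 : ℕ))) := exp_le_exp.mpr hk
    _ = √π * exp (1 / (12 * (k + 1 : ℕ))) := by rw [exp_add, exp_log (by positivity)]

noncomputable def approx (n : ℕ) : ℝ := √(2 * π * n) * (n / exp 1) ^ n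

theorem approx_pos {n : ℕ} (hn : n ≠ 0) : 0 < approx n := by
  unfold approx; positivity

theorem approx_le_factorial (n : ℕ) : approx n ≤ n ! := le_factorial_stirling n

theorem factorial_le_approx_mul_exp {n : ℕ} (hn : n ≠ 0) :
    (n ! : ℝ) ≤ approx n * exp (1 / (12 * n)) := by
  have hpos : 0 < √(2 * n) * (n / exp 1) ^ n := by
    have : (0 : ℝ) < n := by positivity
    positivity
  have h := stirlingSeq_le_sqrt_pi_mul_exp hn
  rw [stirlingSeq, div_le_iff₀ hpos] at h
  calc (n ! : ℝ) ≤ √π * exp (1 / (12 * n)) * (√(2 * n) * (n / exp 1) ^ n) := h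
    _ = _ := by rw [approx, show 2 * π * n = π * (2 * n) by ring, sqrt_mul pi_pos.le]; ring

theorem approx_add_div_approx_mul_approx {i j : ℕ} (hi : i ≠ 0) (hj : j ≠ 0) :
    approx (i + j) / (approx i * approx j) *
        ((i : ℝ) ^ i * (j : ℝ) ^ j / (↑(i + j) : ℝ) ^ (i + j)) =
      √(↑(i + j) / (2 * π * i * j)) := by
  have hi' : (0 : ℝ) < i := by positivity
  have hj' : (0 : ℝ) < j := by positivity
  rw [show (↑(i + j) : ℝ) / (2 * π * i * j) =
        2 * π * ↑(i + j) / ((2 * π * i) * (2 * π * j)) by field_simp,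
    sqrt_div' _ (by positivity), sqrt_mul (x := 2 * π * i) (by positivity),
    approx, approx, approx, div_pow, div_pow, div_pow]
  field_simp
  ring

end Stirling

open Stirling in
theorem choose_mul_pow_mul_pow_div_pow_le {i j : ℕ} (hi : i ≠ 0) (hj : j ≠ 0) :
    ((i + j).choose i : ℝ) * (i : ℝ) ^ i * (j : ℝ) ^ j / (↑(i + j) : ℝ) ^ (i + j) ≤
      exp (1 / (12 * ↑(i + j))) * √(↑(i + j) / (2 * π * i * j)) := by
  have hij : i + j ≠ 0 := by omega
  have hden := mul_le_mul (approx_le_factorial i) (approx_le_factorial j) (approx_pos hj).le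
    (by positivity)
  rw [cast_add_choose, ← approx_add_div_approx_mul_approx hi hj]
  calc ((i + j)! / (i ! * j !) : ℝ) * (i : ℝ) ^ i * (j : ℝ) ^ j / (↑(i + j) : ℝ) ^ (i + j)
      = (i + j)! / (i ! * j !) * ((i : ℝ) ^ i * (j : ℝ) ^ j / (↑(i + j) : ℝ) ^ (i + j)) := by
        ring
    _ ≤ approx (i + j) * exp (1 / (12 * ↑(i + j))) / (approx i * approx j) *
          ((i : ℝ) ^ i * (j : ℝ) ^ j / (↑(i + j) : ℝ) ^ (i + j)) := by
      have hnum := factorial_le_approx_mul_exp hij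
      have hpos := mul_pos (approx_pos hi) (approx_pos hj)
      gcongr
      exact (Nat.cast_nonneg _).trans hnum
    _ = _ := by ring

theorem stmt9_general (m i : ℕ) (hi1 : 1 ≤ i) (hi2 : i ≤ m - 1) :
    (Nat.choose m i : ℝ) * (i : ℝ) ^ i * ((m : ℝ) - i) ^ (m - i) / (m : ℝ) ^ m ≤
      Real.exp (1 / 12) * Real.sqrt ((m : ℝ) / (2 * π * i * ((m : ℝ) - i))) ∧
    (Nat.choose m i : ℝ) * ((i : ℝ) / m) ^ i * (((m : ℝ) - i) / m) ^ (m - i) ≤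
      Real.exp (1 / 12) * Real.sqrt m / Real.sqrt (2 * π * i) := by
  obtain ⟨j, rfl⟩ : ∃ j, m = i + j := ⟨m - i, by omega⟩
  have hi : i ≠ 0 := by omega
  have hj : j ≠ 0 := by omega
  have hij : i + j ≠ 0 := by omega
  have hj' : (1 : ℝ) ≤ j := by exact_mod_cast one_le_iff_ne_zero.mpr hj
  rw [Nat.add_sub_cancel_left, show ((i + j : ℕ) : ℝ) - i = j by push_cast; ring]
  have hexp : exp (1 / (12 * ↑(i + j))) ≤ exp (1 / 12) := by
    gcongr
    exact le_mul_of_one_le_right (by norm_num) (by exact_mod_cast one_le_iff_ne_zero.mpr hij)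
  have hbound := (choose_mul_pow_mul_pow_div_pow_le hi hj).trans
    (mul_le_mul_of_nonneg_right hexp (sqrt_nonneg _))
  refine ⟨hbound, ?_⟩
  calc ((i + j).choose i : ℝ) * ((i : ℝ) / ↑(i + j)) ^ i * ((j : ℝ) / ↑(i + j)) ^ j
      = ((i + j).choose i : ℝ) * (i : ℝ) ^ i * (j : ℝ) ^ j / (↑(i + j) : ℝ) ^ (i + j) := by
        rw [div_pow, div_pow, pow_add]; ring
    _ ≤ exp (1 / 12) * √(↑(i + j) / (2 * π * i * j)) := hbound
    _ ≤ exp (1 / 12) * √(↑(i + j) / (2 * π * i)) := by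
        gcongr ?_ * √?_
        exact div_le_div_of_nonneg_left (by positivity) (by positivity)
          (le_mul_of_one_le_right (by positivity) hj')
    _ = exp (1 / 12) * √↑(i + j) / √(2 * π * i) := by
        rw [sqrt_div' _ (by positivity)]; ring

theorem stmt9 (m i : ℕ) (hm : 2 ≤ m) (hi1 : 1 ≤ i) (hi2 : i ≤ m - 1) :
    (Nat.choose m i : ℝ) * (i : ℝ) ^ i * ((m : ℝ) - i) ^ (m - i) / (m : ℝ) ^ m ≤
      Real.exp (1 / 12) * Real.sqrt ((m : ℝ) / (2 * π * i * ((m : ℝ) - i))) ∧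
    (Nat.choose m i : ℝ) * ((i : ℝ) / m) ^ i * (((m : ℝ) - i) / m) ^ (m - i) ≤
      Real.exp (1 / 12) * Real.sqrt m / Real.sqrt (2 * π * i) :=
  stmt9_general m i hi1 hi2
end
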